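/- Let A be a finite nonempty set, X the simplex in ℝ^A with interior X°, v : X → ℝ^A continuous, and x* ∈ X a GESS of v. Let h be twice continuously differentiable on an open set containing X, with Hessian H(y) positive definite at each y ∈ X°. Let x : [0,∞) → X° be differentiable with x'(t) = V(x(t)) for all t, where V(y) is the H(y)-projection of H(y)⁻¹ v(y) onto ℝ₀^A = {z ∈ ℝ^A : ∑_α z_α = 0}, and suppose sup_{t ≥ 0} max_α |x'_α(t)| < ∞. Then x(t) → x* as t → ∞. -/

import Mathlib

/-!
The Bregman divergence `D(t) = h x* - h (x t) - Dh(x t)(x* - x t)` is a Lyapunov function.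
Because `V` is the `H`-orthogonal projection of `H⁻¹ v` onto the tangent space of the simplex,
`V ⬝ H b = v ⬝ b` for every tangent vector `b`, so `D' = -v(x)·(x* - x) ≤ 0` by the GESS
inequality. `D` is bounded below on the compact simplex, and the bounded velocity makes the rate
`v(x t)·(x* - x t)` uniformly continuous in `t`; by Barbalat's lemma the rate tends to `0`. As `x*`
is its only zero on the simplex, compactness forces `x t → x*`.
-/

open Matrix Filter

noncomputable section

/-- The relative interior of the simplex (all coordinates positive, summing to one). -/
def intSimplex (A : Type*) [Fintype A] : Set (A → ℝ) :=
  {x | (∀ α, 0 < x α) ∧ (∑ α, x α) = 1}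

/-- The quadratic form `wᵀ G w = ‖w‖_G²` associated to a matrix `G`. -/
def qform {A : Type*} [Fintype A] (G : Matrix A A ℝ) (w : A → ℝ) : ℝ :=
  w ⬝ᵥ G.mulVec w

/-- `V` is the `G`-projection of `w` onto `C`. -/
def IsGProj {A : Type*} [Fintype A] (G : Matrix A A ℝ) (C : Set (A → ℝ))
    (w V : A → ℝ) : Prop :=
  V ∈ C ∧ ∀ z ∈ C, qform G (w - V) ≤ qform G (w - z)

/-- The Hessian matrix of `h` at `y`. -/
def hessMat {A : Type*} [Fintype A] [DecidableEq A] (h : (A → ℝ) → ℝ) (y : A → ℝ) :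
    Matrix A A ℝ :=
  Matrix.of fun α β => fderiv ℝ (fderiv ℝ h) y (Pi.single α 1) (Pi.single β 1)

open Set Topology

section Projection

variable {A : Type*} [Fintype A]

theorem qform_sub_smul {G : Matrix A A ℝ} (hG : G.IsSymm) (a b : A → ℝ) (s : ℝ) :
    qform G (a - s • b) = qform G a - s * (2 * (a ⬝ᵥ G *ᵥ b)) + s ^ 2 * qform G b := by
  have hba : b ⬝ᵥ G *ᵥ a = a ⬝ᵥ G *ᵥ b := by
    rw [dotProduct_mulVec, ← mulVec_transpose, hG.eq, dotProduct_comm]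
  simp only [qform, mulVec_sub, mulVec_smul, dotProduct_sub, sub_dotProduct, dotProduct_smul,
    smul_dotProduct, smul_eq_mul, hba]
  ring

theorem IsGProj.dotProduct_mulVec_eq_zero {G : Matrix A A ℝ} (hG : G.IsSymm) {C : Set (A → ℝ)}
    {w V b : A → ℝ} (hV : IsGProj G C w V) (hb : ∀ s : ℝ, V + s • b ∈ C) :
    (w - V) ⬝ᵥ G *ᵥ b = 0 := by
  set c := (w - V) ⬝ᵥ G *ᵥ b
  -- `s ↦ ‖w - (V + s b)‖_G² - ‖w - V‖_G²` is minimal at `s = 0`, where its derivative is `-2c`.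
  have hmin : IsLocalMin (fun s : ℝ => s ^ 2 * qform G b - s * (2 * c)) 0 := by
    refine Filter.Eventually.of_forall fun s => ?_
    have := hV.2 _ (hb s)
    rw [sub_add_eq_sub_sub, qform_sub_smul hG] at this
    simp only
    linarith
  have hderiv : HasDerivAt (fun s : ℝ => s ^ 2 * qform G b - s * (2 * c)) (-(2 * c)) 0 := by
    simpa using ((hasDerivAt_pow 2 (0 : ℝ)).mul_const (qform G b)).fun_sub
      ((hasDerivAt_id' (0 : ℝ)).mul_const (2 * c))
  linarith [hmin.hasDerivAt_eq_zero hderiv]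

theorem IsGProj.dotProduct_mulVec_eq [DecidableEq A] {G : Matrix A A ℝ} (hG : G.IsSymm)
    (hGu : IsUnit G) {C : Set (A → ℝ)} {u V b : A → ℝ} (hV : IsGProj G C (G⁻¹ *ᵥ u) V)
    (hb : ∀ s : ℝ, V + s • b ∈ C) : V ⬝ᵥ G *ᵥ b = u ⬝ᵥ b := by
  have h := hV.dotProduct_mulVec_eq_zero hG hb
  rw [sub_dotProduct, sub_eq_zero] at h
  rw [← h, dotProduct_mulVec, ← mulVec_transpose, hG.eq, mulVec_mulVec,
    mul_nonsing_inv G ((isUnit_iff_isUnit_det G).1 hGu), one_mulVec, dotProduct_comm]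

end Projection

theorem fderiv_fderiv_apply_eq_dotProduct_hessMat {A : Type*} [Fintype A] [DecidableEq A]
    (h : (A → ℝ) → ℝ) (y u w : A → ℝ) :
    fderiv ℝ (fderiv ℝ h) y u w = u ⬝ᵥ hessMat h y *ᵥ w := by
  rw [← Matrix.toLinearMap₂'_apply', hessMat]
  exact (LinearMap.congr_fun₂ (Matrix.toLinearMap₂'_toMatrix' (R := ℝ)
    (fderiv ℝ (fderiv ℝ h) y).toLinearMap₁₂) u w).symm

section Bregman

variable {E : Type*} [NormedAddCommGroup E] [NormedSpace ℝ E]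

def bregmanDiv (h : E → ℝ) (p y : E) : ℝ :=
  h p - h y - fderiv ℝ h y (p - y)

theorem ContDiffOn.continuousOn_bregmanDiv {h : E → ℝ} {U : Set E} (hh : ContDiffOn ℝ 1 h U)
    (hU : IsOpen U) (p : E) : ContinuousOn (bregmanDiv h p) U :=
  (continuousOn_const.sub hh.continuousOn).sub
    ((hh.continuousOn_fderiv_of_isOpen hU le_rfl).clm_apply
      (continuousOn_const.sub continuousOn_id))

theorem HasDerivWithinAt.bregmanDiv {h : E → ℝ} {x : ℝ → E} {x' : E} {s : Set ℝ} {t : ℝ}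
    (hh : ContDiffAt ℝ 2 h (x t)) (hx : HasDerivWithinAt x x' s t) (p : E) :
    HasDerivWithinAt (fun τ => bregmanDiv h p (x τ))
      (-fderiv ℝ (fderiv ℝ h) (x t) x' (p - x t)) s t := by
  have h₁ : HasFDerivAt h (fderiv ℝ h (x t)) (x t) :=
    (hh.differentiableAt two_ne_zero).hasFDerivAt
  have h₂ : HasFDerivAt (fderiv ℝ h) (fderiv ℝ (fderiv ℝ h) (x t)) (x t) :=
    ((hh.fderiv_right le_rfl).differentiableAt one_ne_zero).hasFDerivAt
  refine (((hasDerivWithinAt_const t s (h p)).fun_sub (h₁.comp_hasDerivWithinAt t hx)).fun_sub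
    ((h₂.comp_hasDerivWithinAt t hx).clm_apply
      ((hasDerivWithinAt_const t s p).fun_sub hx))).congr_deriv ?_
  simp only [Function.comp_apply, map_sub, map_zero]
  ring

end Bregman

theorem hasDerivWithinAt_bregmanDiv_of_isGProj {A : Type*} [Fintype A] [DecidableEq A]
    {h : (A → ℝ) → ℝ} {x : ℝ → A → ℝ} {u w p : A → ℝ} {s : Set ℝ} {t : ℝ}
    (hh : ContDiffAt ℝ 2 h (x t)) (hG : (hessMat h (x t)).PosDef)
    (hw : IsGProj (hessMat h (x t)) {z | ∑ α, z α = 0} ((hessMat h (x t))⁻¹ *ᵥ u) w)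
    (hx : HasDerivWithinAt x w s t) (hp : ∑ α, p α = ∑ α, x t α) :
    HasDerivWithinAt (fun τ => bregmanDiv h p (x τ)) (-(u ⬝ᵥ (p - x t))) s t := by
  have hline : ∀ r : ℝ, w + r • (p - x t) ∈ {z : A → ℝ | ∑ α, z α = 0} := by
    intro r
    have hw0 : ∑ α, w α = 0 := hw.1
    simp [Finset.sum_add_distrib, ← Finset.mul_sum, Finset.sum_sub_distrib, hw0, hp]
  rw [← hw.dotProduct_mulVec_eq (isHermitian_iff_isSymm.1 hG.isHermitian) hG.isUnit hline,
    ← fderiv_fderiv_apply_eq_dotProduct_hessMat]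
  exact hx.bregmanDiv hh p

theorem image_sub_le_mul_sub_of_hasDerivWithinAt_le {f f' : ℝ → ℝ} {a b C : ℝ} (hab : a ≤ b)
    (hf : ContinuousOn f (Icc a b)) (hf' : ∀ x ∈ Ioo a b, HasDerivWithinAt f (f' x) (Ioo a b) x)
    (hle : ∀ x ∈ Ioo a b, f' x ≤ C) : f b - f a ≤ C * (b - a) := by
  have hanti : AntitoneOn (fun x => f x - C * x) (Icc a b) := by
    refine antitoneOn_of_hasDerivWithinAt_nonpos (f' := fun x => f' x - C) (convex_Icc a b)
      (hf.sub (continuousOn_const.mul continuousOn_id)) (fun x hx => ?_) (fun x hx => ?_)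
    · rw [interior_Icc] at hx ⊢
      simpa using (hf' x hx).fun_sub ((hasDerivWithinAt_id x _).const_mul C)
    · rw [interior_Icc] at hx
      linarith [hle x hx]
  linarith [hanti (left_mem_Icc.2 hab) (right_mem_Icc.2 hab) hab]

/-- Barbalat's lemma. -/
theorem tendsto_zero_of_hasDerivWithinAt_neg {D g : ℝ → ℝ}
    (hD : ∀ t ∈ Ici (0 : ℝ), HasDerivWithinAt D (-g t) (Ici 0) t)
    (hg : ∀ t ∈ Ici (0 : ℝ), 0 ≤ g t) (hgu : UniformContinuousOn g (Ici 0))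
    (hDb : BddBelow (D '' Ici 0)) : Tendsto g atTop (𝓝 0) := by
  have hcont : ContinuousOn D (Ici 0) := fun t ht => (hD t ht).continuousWithinAt
  have hanti : AntitoneOn D (Ici 0) := by
    refine antitoneOn_of_hasDerivWithinAt_nonpos (convex_Ici 0) hcont
      (fun t ht => (hD t (interior_subset ht)).mono interior_subset) (fun t ht => ?_)
    linarith [hg t (interior_subset ht)]
  rw [Metric.tendsto_atTop]
  intro ε hε
  obtain ⟨η, hη, hgη⟩ := Metric.uniformContinuousOn_iff.1 hgu (ε / 2) (half_pos hε)
  -- Each time `g ≥ ε`, uniform continuity keeps `g ≥ ε / 2` for a time `η / 2`,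
  -- during which `D` drops by a fixed amount.
  have hdrop : ∀ a ∈ Ici (0 : ℝ), ε ≤ g a → D (a + η / 2) - D a ≤ -(ε / 2) * (η / 2) := by
    intro a ha hga
    have hsub : Ioo a (a + η / 2) ⊆ Ici 0 := fun s hs => le_trans ha hs.1.le
    have := image_sub_le_mul_sub_of_hasDerivWithinAt_le (f' := fun s => -g s) (C := -(ε / 2))
      (by linarith)
      (hcont.mono fun s hs => le_trans ha hs.1) (fun s hs => (hD s (hsub hs)).mono hsub)
      (fun s hs => ?_)
    · simpa using this
    · have hclose := hgη s (hsub hs) a ha (by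
        rw [Real.dist_eq, abs_of_pos (by linarith [hs.1])]; linarith [hs.2])
      rw [Real.dist_eq] at hclose
      linarith [(abs_lt.1 hclose).1]
  have hne : (D '' Ici 0).Nonempty := ⟨D 0, mem_image_of_mem D self_mem_Ici⟩
  obtain ⟨_, ⟨T, hT, rfl⟩, hDT⟩ :=
    exists_lt_of_csInf_lt hne (lt_add_of_pos_right (sInf (D '' Ici 0)) (by positivity :
      0 < ε / 2 * (η / 2)))
  refine ⟨T, fun a haT => ?_⟩
  have ha : a ∈ Ici (0 : ℝ) := le_trans hT haT
  by_contra! hga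
  rw [Real.dist_eq, sub_zero, abs_of_nonneg (hg a ha)] at hga
  have hinf := csInf_le hDb (mem_image_of_mem D (show a + η / 2 ∈ Ici (0 : ℝ) by
    simp only [mem_Ici] at ha ⊢; linarith))
  linarith [hdrop a ha hga, hanti hT ha haT]

theorem IsCompact.tendsto_nhds_of_tendsto_comp {X Y ι : Type*} [TopologicalSpace X]
    [TopologicalSpace Y] [T2Space Y] {S : Set X} (hS : IsCompact S) {φ : X → Y}
    (hφ : ContinuousOn φ S) {c : Y} {p : X} (hp : ∀ y ∈ S, φ y = c → y = p) {l : Filter ι}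
    {f : ι → X} (hf : ∀ᶠ i in l, f i ∈ S) (hφf : Tendsto (φ ∘ f) l (𝓝 c)) :
    Tendsto f l (𝓝 p) := by
  refine hS.tendsto_nhds_of_unique_mapClusterPt hf fun q hq hcl => hp q hq ?_
  have : (𝓝[S] q ⊓ map f l).NeBot := by
    have hfS : map f l ≤ 𝓟 S := le_principal_iff.2 hf
    rwa [nhdsWithin, inf_assoc, inf_eq_right.2 hfS]
  exact tendsto_nhds_unique ((hφ q hq).mono_left inf_le_left)
    ((tendsto_map'_iff.2 hφf).mono_left inf_le_right)

theorem LipschitzOnWith.of_hasDerivWithinAt_abs_le {A : Type*} [Fintype A] {x x' : ℝ → A → ℝ}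
    {s : Set ℝ} (hs : Convex ℝ s) (hx : ∀ t ∈ s, HasDerivWithinAt x (x' t) s t) {B : ℝ}
    (hB : ∀ t ∈ s, ∀ α, |x' t α| ≤ B) : LipschitzOnWith B.toNNReal x s := by
  refine hs.lipschitzOnWith_of_nnnorm_hasDerivWithin_le hx fun t ht => ?_
  refine pi_nnnorm_le_iff.2 fun α => ?_
  rw [← NNReal.coe_le_coe, coe_nnnorm, Real.coe_toNNReal', Real.norm_eq_abs]
  exact (hB t ht α).trans (le_max_left _ _)

theorem stmt_10_general {A : Type*} [Fintype A] [DecidableEq A]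
    (v : (A → ℝ) → (A → ℝ)) (hvcont : ContinuousOn v (stdSimplex ℝ A))
    (xstar : A → ℝ) (hxstarX : xstar ∈ stdSimplex ℝ A)
    (hGESS : ∀ y ∈ stdSimplex ℝ A,
      v y ⬝ᵥ (y - xstar) ≤ 0 ∧ (v y ⬝ᵥ (y - xstar) = 0 → y = xstar))
    (h : (A → ℝ) → ℝ) (U : Set (A → ℝ)) (hU : IsOpen U) (hXU : stdSimplex ℝ A ⊆ U)
    (hh : ContDiffOn ℝ 2 h U)
    (hpd : ∀ y ∈ intSimplex A, (hessMat h y).PosDef)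
    (V : (A → ℝ) → (A → ℝ))
    (hV : ∀ y ∈ intSimplex A,
      IsGProj (hessMat h y) {z : A → ℝ | (∑ α, z α) = 0}
        ((hessMat h y)⁻¹.mulVec (v y)) (V y))
    (x : ℝ → (A → ℝ)) (hxint : ∀ t : ℝ, 0 ≤ t → x t ∈ intSimplex A)
    (hx' : ∀ t : ℝ, 0 ≤ t → HasDerivWithinAt x (V (x t)) (Set.Ici 0) t)
    (hbdd : ∃ B : ℝ, ∀ t : ℝ, 0 ≤ t → ∀ α : A, |V (x t) α| ≤ B) :
    Tendsto (fun t => x t) atTop (nhds xstar) := by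
  set φ : (A → ℝ) → ℝ := fun y => v y ⬝ᵥ (xstar - y)
  have hφ : ∀ y, φ y = -(v y ⬝ᵥ (y - xstar)) := fun y => by rw [← dotProduct_neg, neg_sub]
  have hφcont : ContinuousOn φ (stdSimplex ℝ A) :=
    continuousOn_finsetSum _ fun α _ => ((continuous_apply α).comp_continuousOn hvcont).mul
      (continuous_const.sub (continuous_apply α)).continuousOn
  have hxS : MapsTo x (Ici 0) (stdSimplex ℝ A) := fun t ht =>
    ⟨fun α => ((hxint t ht).1 α).le, (hxint t ht).2⟩
  have hD : ∀ t ∈ Ici (0 : ℝ), HasDerivWithinAt (fun τ => bregmanDiv h xstar (x τ))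
      (-φ (x t)) (Ici 0) t := fun t ht =>
    hasDerivWithinAt_bregmanDiv_of_isGProj (hh.contDiffAt (hU.mem_nhds (hXU (hxS ht))))
      (hpd _ (hxint t ht)) (hV _ (hxint t ht)) (hx' t ht) (by rw [hxstarX.2, (hxint t ht).2])
  obtain ⟨B, hB⟩ := hbdd
  have hφx : UniformContinuousOn (φ ∘ x) (Ici 0) :=
    ((isCompact_stdSimplex ℝ A).uniformContinuousOn_of_continuous hφcont).comp
      (LipschitzOnWith.of_hasDerivWithinAt_abs_le (convex_Ici 0) hx' hB).uniformContinuousOn hxS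
  have hDb : BddBelow ((fun τ => bregmanDiv h xstar (x τ)) '' Ici 0) :=
    ((isCompact_stdSimplex ℝ A).bddBelow_image
      (((hh.of_le one_le_two).continuousOn_bregmanDiv hU xstar).mono hXU)).mono
      (by rintro _ ⟨t, ht, rfl⟩; exact mem_image_of_mem _ (hxS ht))
  refine (isCompact_stdSimplex ℝ A).tendsto_nhds_of_tendsto_comp hφcont
    (fun y hy hy0 => (hGESS y hy).2 (by linarith [hφ y])) (eventually_atTop.2 ⟨0, hxS⟩)
    (tendsto_zero_of_hasDerivWithinAt_neg hD (fun t ht => ?_) hφx hDb)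
  show 0 ≤ φ (x t)
  linarith [hφ (x t), (hGESS _ (hxS ht)).1]

/-- convergence of interior solutions of continuous Hessian dynamics to a GESS.
If `x : [0,∞) → X°` solves `x'(t) = V(x(t))`, where `V(y)` is the `H(y)`-projection of
`H(y)⁻¹ v(y)` onto `ℝ₀^A`, and the velocities are uniformly bounded, then `x(t) → x*`. -/
theorem stmt_10 {A : Type*} [Fintype A] [DecidableEq A] [Nonempty A]
    (v : (A → ℝ) → (A → ℝ)) (hvcont : ContinuousOn v (stdSimplex ℝ A))
    (xstar : A → ℝ) (hxstarX : xstar ∈ stdSimplex ℝ A)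
    (hGESS : ∀ y ∈ stdSimplex ℝ A,
      v y ⬝ᵥ (y - xstar) ≤ 0 ∧ (v y ⬝ᵥ (y - xstar) = 0 → y = xstar))
    (h : (A → ℝ) → ℝ) (U : Set (A → ℝ)) (hU : IsOpen U) (hXU : stdSimplex ℝ A ⊆ U)
    (hh : ContDiffOn ℝ 2 h U)
    (hpd : ∀ y ∈ intSimplex A, (hessMat h y).PosDef)
    (V : (A → ℝ) → (A → ℝ))
    (hV : ∀ y ∈ intSimplex A,
      IsGProj (hessMat h y) {z : A → ℝ | (∑ α, z α) = 0}
        ((hessMat h y)⁻¹.mulVec (v y)) (V y))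
    (x : ℝ → (A → ℝ)) (hxint : ∀ t : ℝ, 0 ≤ t → x t ∈ intSimplex A)
    (hx' : ∀ t : ℝ, 0 ≤ t → HasDerivWithinAt x (V (x t)) (Set.Ici 0) t)
    (hbdd : ∃ B : ℝ, ∀ t : ℝ, 0 ≤ t → ∀ α : A, |V (x t) α| ≤ B) :
    Tendsto (fun t => x t) atTop (nhds xstar) :=
  stmt_10_general v hvcont xstar hxstarX hGESS h U hU hXU hh hpd V hV x hxint hx' hbdd
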